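/- Given a CNF formula φ with variables x₁,…,xₙ and clauses C₁,…,C_k, construct the graph G with vertices {x_i}, {x̄_i}, and {C_j}, with edges x_i x̄_i for each i, and an edge between each clause vertex C_j and each literal vertex it contains. Then φ is satisfiable if and only if G has a maximal independent set disjoint from the set of clause vertices. -/

import Mathlib

/-- `S` is a maximal independent set. -/
def IsMaxIndep {V : Type*} (adj : V → V → Prop) (S : Set V) : Prop :=
  (∀ u ∈ S, ∀ v ∈ S, ¬ adj u v) ∧ ∀ v, v ∉ S → ∃ u ∈ S, adj u v

/-- The graph associated with a CNF formula with `n` variables and `k` clauses, where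
clause `j` has positive literals `P j` and negative literals `N j`. Vertices:
`Sum.inl (Sum.inl i)` is the literal `xᵢ`, `Sum.inl (Sum.inr i)` is the literal `¬xᵢ`,
`Sum.inr j` is clause `j`. Each pair of contradicting literals is adjacent, and each
clause is adjacent exactly to the literals it contains. -/
def cnfG (n k : ℕ) (P N : Fin k → Set (Fin n)) :
    SimpleGraph ((Fin n ⊕ Fin n) ⊕ Fin k) where
  Adj a b :=
    match a, b with
    | Sum.inl (Sum.inl i), Sum.inl (Sum.inr j) => i = j
    | Sum.inl (Sum.inr i), Sum.inl (Sum.inl j) => i = j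
    | Sum.inl (Sum.inl i), Sum.inr j => i ∈ P j
    | Sum.inr j, Sum.inl (Sum.inl i) => i ∈ P j
    | Sum.inl (Sum.inr i), Sum.inr j => i ∈ N j
    | Sum.inr j, Sum.inl (Sum.inr i) => i ∈ N j
    | _, _ => False
  symm := by
    constructor
    rintro ((i | i) | j) ((i' | i') | j') h <;>
      first
        | exact h
        | exact h.symm
  loopless := by
    constructor
    rintro ((i | i) | j) h <;> exact h

/-!
A satisfying assignment `a` gives the independent set of literal vertices made true by `a`:
it contains exactly one of `xᵢ`, `x̄ᵢ` for each `i`, which dominates the other, and each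
clause vertex is dominated by a true literal of that clause. Conversely, a maximal independent
set `S` avoiding the clause vertices defines the assignment `xᵢ ↦ (xᵢ ∈ S)`: each clause vertex
has a neighbour in `S`, which is one of its literals, and that literal is true because `S` cannot
contain both `xᵢ` and `x̄ᵢ`.
-/

namespace CnfGraph

variable {n k : ℕ} {P N : Fin k → Set (Fin n)}

def trueLiterals (a : Fin n → Bool) : Set ((Fin n ⊕ Fin n) ⊕ Fin k)
  | Sum.inl (Sum.inl i) => a i = true
  | Sum.inl (Sum.inr i) => a i = false
  | Sum.inr _ => False

@[simp] theorem pos_mem_trueLiterals {a : Fin n → Bool} {i : Fin n} :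
    (Sum.inl (Sum.inl i) : (Fin n ⊕ Fin n) ⊕ Fin k) ∈ trueLiterals a ↔ a i = true := Iff.rfl

@[simp] theorem neg_mem_trueLiterals {a : Fin n → Bool} {i : Fin n} :
    (Sum.inl (Sum.inr i) : (Fin n ⊕ Fin n) ⊕ Fin k) ∈ trueLiterals a ↔ a i = false := Iff.rfl

@[simp] theorem clause_not_mem_trueLiterals (a : Fin n → Bool) (j : Fin k) :
    Sum.inr j ∉ trueLiterals a := id

theorem isMaxIndep_trueLiterals {a : Fin n → Bool}
    (ha : ∀ j : Fin k, (∃ i ∈ P j, a i = true) ∨ (∃ i ∈ N j, a i = false)) :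
    IsMaxIndep (cnfG n k P N).Adj (trueLiterals a) := by
  constructor
  · rintro ((i | i) | j) hu ((i' | i') | j') hv hadj <;> simp_all [cnfG]
  · rintro ((i | i) | j) hv
    · exact ⟨Sum.inl (Sum.inr i), by simpa using hv, rfl⟩
    · exact ⟨Sum.inl (Sum.inl i), by simpa using hv, rfl⟩
    · rcases ha j with ⟨i, hiP, hi⟩ | ⟨i, hiN, hi⟩
      · exact ⟨Sum.inl (Sum.inl i), hi, hiP⟩
      · exact ⟨Sum.inl (Sum.inr i), hi, hiN⟩

theorem clause_satisfied_of_isMaxIndep {S : Set ((Fin n ⊕ Fin n) ⊕ Fin k)}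
    (hS : IsMaxIndep (cnfG n k P N).Adj S) (hclauses : ∀ j : Fin k, Sum.inr j ∉ S)
    (j : Fin k) :
    (∃ i ∈ P j, Sum.inl (Sum.inl i) ∈ S) ∨ (∃ i ∈ N j, Sum.inl (Sum.inl i) ∉ S) := by
  obtain ⟨u, huS, hadj⟩ := hS.2 (Sum.inr j) (hclauses j)
  rcases u with (i | i) | j'
  · exact Or.inl ⟨i, hadj, huS⟩
  · exact Or.inr ⟨i, hadj, fun hi => hS.1 _ hi _ huS rfl⟩
  · exact absurd huS (hclauses j')

end CnfGraph

open CnfGraph in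
/-- The CNF formula is satisfiable iff the associated graph has a maximal independent
set disjoint from the set of clause vertices. -/
theorem stmt18 (n k : ℕ) (P N : Fin k → Set (Fin n)) :
    (∃ a : Fin n → Bool, ∀ j : Fin k,
      (∃ i ∈ P j, a i = true) ∨ (∃ i ∈ N j, a i = false)) ↔
    (∃ S : Set ((Fin n ⊕ Fin n) ⊕ Fin k), IsMaxIndep (cnfG n k P N).Adj S ∧
      ∀ j : Fin k, Sum.inr j ∉ S) := by
  classical
  constructor
  · rintro ⟨a, ha⟩
    exact ⟨trueLiterals a, isMaxIndep_trueLiterals ha, clause_not_mem_trueLiterals a⟩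
  · rintro ⟨S, hS, hclauses⟩
    refine ⟨fun i => decide (Sum.inl (Sum.inl i) ∈ S), fun j => ?_⟩
    simpa using clause_satisfied_of_isMaxIndep hS hclauses j
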